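/- The q-Stirling number of the first kind satisfies c_q[n,k] = Σ_{T ∈ R(n, n−k)} q^{s(T)}, where R(n, n−k) is the set of placements of n−k non-attacking-by-column rooks on a staircase board of length n (the board with n−i squares in row i, left-justified), and s(T) is the total number of squares strictly below the rooks of T within the board. -/
import Mathlib


open scoped Classical
open Polynomial

/-- Rook placements of `n` rooks, no two in the same column, on the staircase board of
length `m` (column `c`, indexed from the left starting at `0`, has `m - 1 - c` squares).
`f c = 0` means column `c` is empty, and `f c = b + 1` means column `c` carries a rook
with `b` squares below it. -/
def Rooks (m n : ℕ) : Finset (Fin (m - 1) → Fin m) :=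
  Finset.univ.filter fun f =>
    (∀ c, (f c : ℕ) ≤ m - 1 - (c : ℕ)) ∧
    (Finset.univ.filter fun c => (f c : ℕ) ≠ 0).card = n

/-- The total number of squares strictly below the rooks of the placement `f`. -/
def rbelow {m : ℕ} (f : Fin (m - 1) → Fin m) : ℕ := ∑ c, ((f c : ℕ) - 1)

/-- The (unsigned) `q`-Stirling numbers of the first kind:
`c_q[n,k] = c_q[n-1,k-1] + [n-1]_q ⬝ c_q[n-1,k]`, `c_q[n,0] = δ_{n,0}`. -/
noncomputable def cq : ℕ → ℕ → Polynomial ℤ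
  | 0, 0 => 1
  | 0, _ + 1 => 0
  | _ + 1, 0 => 0
  | n + 1, k + 1 => cq n k + (∑ i ∈ Finset.range n, X ^ i) * cq n (k + 1)

noncomputable def S (m j : ℕ) : Polynomial ℤ := ∑ f ∈ Rooks m j, X ^ rbelow f

noncomputable def Tail (m j : ℕ) : Polynomial ℤ :=
  ∑ g ∈ Finset.univ.filter (fun g : Fin m → Fin (m + 2) =>
      (∀ c : Fin m, (g c : ℕ) ≤ m - (c : ℕ)) ∧
      (Finset.univ.filter fun c => (g c : ℕ) ≠ 0).card = j),
    X ^ (∑ c, ((g c : ℕ) - 1))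

lemma tail_eq (m j : ℕ) : Tail m j = S (m + 1) j := by
  rw [Tail, S]
  refine Finset.sum_bij'
    (fun g hg => (fun c => (⟨(g c : ℕ), ?_⟩ : Fin (m + 1)) : Fin (m + 1 - 1) → Fin (m + 1)))
    (fun h _ => fun c => Fin.castSucc (h c)) ?_ ?_ ?_ ?_ ?_
  · have := (Finset.mem_filter.mp hg).2.1 c
    omega
  · intro g hg
    simp only [Rooks, Finset.mem_filter, Finset.mem_univ, true_and] at hg ⊢
    refine ⟨fun c => ?_, ?_⟩
    · have := hg.1 c; simpa using by omega
    · exact hg.2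
  · intro h hh
    simp only [Rooks, Finset.mem_filter, Finset.mem_univ, true_and] at hh ⊢
    refine ⟨fun c => ?_, ?_⟩
    · have := hh.1 c; simpa using by omega
    · exact hh.2
  · intro g hg; funext c; exact Fin.ext rfl
  · intro h hh; funext c; exact Fin.ext rfl
  · intro g hg
    rw [rbelow]
    congr 1

lemma S_clean (m J : ℕ) : S (m + 2) J =
    ∑ f : Fin (m + 1) → Fin (m + 2),
      if ((∀ c : Fin (m + 1), (f c : ℕ) ≤ m + 1 - (c : ℕ)) ∧
          (Finset.univ.filter fun c => (f c : ℕ) ≠ 0).card = J)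
      then X ^ (∑ c, ((f c : ℕ) - 1)) else 0 := by
  rw [S, Rooks, Finset.sum_filter]
  rfl

noncomputable def TailC (m J : ℕ) : Polynomial ℤ :=
  ∑ g ∈ Finset.univ.filter (fun g : Fin m → Fin (m + 2) =>
      (∀ c : Fin m, (g c : ℕ) ≤ m - (c : ℕ)) ∧
      1 + (Finset.univ.filter fun c => (g c : ℕ) ≠ 0).card = J),
    X ^ (∑ c, ((g c : ℕ) - 1))

lemma key (m J : ℕ) (a : Fin (m + 2)) (g : Fin m → Fin (m + 2)) :
    (if ((∀ c : Fin (m + 1), ((Fin.cons a g : Fin (m + 1) → Fin (m + 2)) c : ℕ) ≤ m + 1 - (c : ℕ)) ∧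
        (Finset.univ.filter fun c : Fin (m + 1) =>
          ((Fin.cons a g : Fin (m + 1) → Fin (m + 2)) c : ℕ) ≠ 0).card = J)
      then (X : Polynomial ℤ) ^ (∑ c : Fin (m + 1),
          (((Fin.cons a g : Fin (m + 1) → Fin (m + 2)) c : ℕ) - 1)) else 0) =
    if (a : ℕ) = 0 then
      (if ((∀ c : Fin m, (g c : ℕ) ≤ m - (c : ℕ)) ∧
          (Finset.univ.filter fun c => (g c : ℕ) ≠ 0).card = J)
        then X ^ (∑ c, ((g c : ℕ) - 1)) else 0)
    else X ^ ((a : ℕ) - 1) *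
      (if ((∀ c : Fin m, (g c : ℕ) ≤ m - (c : ℕ)) ∧
          1 + (Finset.univ.filter fun c => (g c : ℕ) ≠ 0).card = J)
        then X ^ (∑ c, ((g c : ℕ) - 1)) else 0) := by
  have hcard : (Finset.univ.filter fun c : Fin (m + 1) =>
      ((Fin.cons a g : Fin (m + 1) → Fin (m + 2)) c : ℕ) ≠ 0).card
      = (if (a : ℕ) ≠ 0 then 1 else 0) +
        (Finset.univ.filter fun c => (g c : ℕ) ≠ 0).card := by
    rw [Finset.card_filter, Finset.card_filter, Fin.sum_univ_succ]
    simp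
  have hm : ∀ c : Fin m, m + 1 - ((c : ℕ) + 1) = m - (c : ℕ) := fun c => by omega
  have hforall : (∀ c : Fin (m + 1),
      ((Fin.cons a g : Fin (m + 1) → Fin (m + 2)) c : ℕ) ≤ m + 1 - (c : ℕ)) ↔
      ((a : ℕ) ≤ m + 1 ∧ ∀ c : Fin m, (g c : ℕ) ≤ m - (c : ℕ)) := by
    rw [Fin.forall_fin_succ]
    simp [hm]
  have hsum : (∑ c : Fin (m + 1), (((Fin.cons a g : Fin (m + 1) → Fin (m + 2)) c : ℕ) - 1))
      = ((a : ℕ) - 1) + ∑ c, ((g c : ℕ) - 1) := by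
    rw [Fin.sum_univ_succ]
    simp
  rw [hcard, hsum]
  by_cases h0 : (a : ℕ) = 0
  · simp [h0, hforall]
  · have ha : (a : ℕ) ≤ m + 1 := by have := a.isLt; omega
    simp [h0, hforall, ha, pow_add, mul_ite]

lemma S_decomp (m J : ℕ) :
    S (m + 2) J = Tail m J + (∑ i ∈ Finset.range (m + 1), X ^ i) * TailC m J := by
  rw [S_clean]
  rw [← Equiv.sum_comp (Fin.consEquiv (fun _ : Fin (m + 1) => Fin (m + 2)))]
  rw [Fintype.sum_prod_type]
  simp only [Fin.consEquiv_apply]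
  simp only [key m J]
  rw [Fin.sum_univ_succ]
  simp only [Fin.val_zero, Fin.val_succ, if_pos rfl, Nat.succ_ne_zero, if_false]
  rw [Tail, Finset.sum_filter, TailC]
  congr 1
  rw [Finset.sum_mul, ← Fin.sum_univ_eq_sum_range
    (fun i => (X : Polynomial ℤ) ^ i *
      (∑ g ∈ Finset.univ.filter (fun g : Fin m → Fin (m + 2) =>
          (∀ c : Fin m, (g c : ℕ) ≤ m - (c : ℕ)) ∧
          1 + (Finset.univ.filter fun c => (g c : ℕ) ≠ 0).card = J),
        X ^ (∑ c, ((g c : ℕ) - 1)))) (m + 1)]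
  refine Finset.sum_congr rfl fun b _ => ?_
  rw [Finset.mul_sum, Finset.sum_filter]
  refine Finset.sum_congr rfl fun g _ => ?_
  simp [mul_ite]

lemma TailC_zero (m : ℕ) : TailC m 0 = 0 := by
  rw [TailC]
  rw [Finset.filter_false_of_mem]
  · simp
  · rintro g - ⟨-, h⟩
    omega

lemma TailC_succ (m j : ℕ) : TailC m (j + 1) = Tail m j := by
  rw [TailC, Tail]
  refine Finset.sum_congr ?_ fun _ _ => rfl
  apply Finset.filter_congr
  intro g _
  constructor <;> rintro ⟨h1, h2⟩ <;> exact ⟨h1, by omega⟩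

lemma S_step_zero (m : ℕ) : S (m + 2) 0 = S (m + 1) 0 := by
  rw [S_decomp, TailC_zero, tail_eq, mul_zero, add_zero]

lemma S_step_succ (m j : ℕ) :
    S (m + 2) (j + 1) = S (m + 1) (j + 1) + (∑ i ∈ Finset.range (m + 1), X ^ i) * S (m + 1) j := by
  rw [S_decomp, TailC_succ, tail_eq, tail_eq]

lemma S_zero : S 0 0 = 1 := by
  rw [S]
  have h : Rooks 0 0 = Finset.univ := by
    rw [Rooks]
    apply Finset.filter_true_of_mem
    intro f _
    exact ⟨fun c => c.elim0, by simp⟩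
  haveI : IsEmpty (Fin (0 - 1)) := inferInstanceAs (IsEmpty (Fin 0))
  rw [h, Finset.univ_unique, Finset.sum_singleton]
  simp [rbelow]

lemma S_one : S 1 0 = 1 := by
  rw [S]
  have h : Rooks 1 0 = Finset.univ := by
    rw [Rooks]
    apply Finset.filter_true_of_mem
    intro f _
    exact ⟨fun c => c.elim0, by simp⟩
  haveI : IsEmpty (Fin (1 - 1)) := inferInstanceAs (IsEmpty (Fin 0))
  rw [h, Finset.univ_unique, Finset.sum_singleton]
  simp [rbelow]

lemma S_eq_zero (m j : ℕ) (h : m - 1 < j) : S m j = 0 := by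
  rw [S]
  have he : Rooks m j = ∅ := by
    rw [Rooks, Finset.filter_false_of_mem]
    rintro f - ⟨-, hc⟩
    have h1 := Finset.card_filter_le (Finset.univ : Finset (Fin (m - 1)))
      (fun c => (f c : ℕ) ≠ 0)
    rw [hc] at h1
    simp [Finset.card_univ] at h1
    omega
  simp [he]

lemma cq_zero (n : ℕ) : ∀ j, n < j → cq n j = 0 := by
  induction n with
  | zero => rintro (_ | j) h
            · omega
            · rfl
  | succ n ih =>
    rintro (_ | j) h
    · omega
    · rw [cq, ih j (by omega), ih (j + 1) (by omega), mul_zero, add_zero]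

lemma S_step_zero' (n : ℕ) : S (n + 1) 0 = S n 0 := by
  cases n with
  | zero => rw [S_one, S_zero]
  | succ m => exact S_step_zero m

theorem cq_eq_sum_rooks (n k : ℕ) (hk : k ≤ n) :
    cq n k = ∑ f ∈ Rooks n (n - k), X ^ rbelow f := by
  show cq n k = S n (n - k)
  induction n generalizing k with
  | zero =>
    obtain rfl : k = 0 := by omega
    rw [Nat.sub_self, S_zero]
    rfl
  | succ n ih =>
    rcases k with _ | k
    · rw [Nat.sub_zero, S_eq_zero (n + 1) (n + 1) (by omega)]
      rfl
    · have hk' : k ≤ n := by omega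
      rw [cq]
      rcases eq_or_lt_of_le hk' with rfl | hlt
      · rw [Nat.sub_self, cq_zero k (k + 1) (by omega), mul_zero, add_zero,
          ih k le_rfl, Nat.sub_self, S_step_zero']
      · obtain ⟨m, rfl⟩ : ∃ m, n = m + 1 := ⟨n - 1, by omega⟩
        rw [show m + 1 + 1 - (k + 1) = (m - k) + 1 from by omega, S_step_succ,
          ih k hk', ih (k + 1) (by omega),
          show m + 1 - k = (m - k) + 1 from by omega,
          show m + 1 - (k + 1) = m - k from by omega]
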